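/- Suppose Z ∈ ℂ, d_k ≥ 0 for k ≥ 0, E_k ∈ ℝ, and |Z - ∑_k d_k exp(iE_k)| ≤ β with (β + ∑_{k≥1} d_k)/d_0 ≤ 1. Then |Z - d_0 exp(iE_0)| ≤ β + ∑_{k≥1} d_k, and the angular distance between arg(Z) and E_0 (mod 2π) is at most arcsin((β + ∑_{k≥1} d_k)/d_0). -/

import Mathlib

/-!
By the triangle inequality `Z` lies in the closed disc of radius `r = β + ∑_{k ≥ 1} d k` around
`d 0 exp(i E 0)`. Rotating by `exp(-i E 0)` moves the centre to the positive real `d 0`. Since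
`r ≤ d 0`, every point `u` of the disc around `d 0` has `0 ≤ Re u` and `|Im u| · d 0 ≤ r ‖u‖`,
i.e. `|arg u| ≤ arcsin (r / d 0)`: the tangents from the origin bound the angle of the disc.
-/

open Complex

noncomputable def circleDist (θ φ : ℝ) : ℝ := ⨅ k : ℤ, |θ - φ + 2 * (k : ℝ) * Real.pi|

theorem norm_sub_le_norm_sub_sum_add_sum_erase {E ι : Type*} [SeminormedAddCommGroup E]
    [DecidableEq ι] {s : Finset ι} {i : ι} (hi : i ∈ s) (f : ι → E) (z : E) :
    ‖z - f i‖ ≤ ‖z - ∑ k ∈ s, f k‖ + ∑ k ∈ s.erase i, ‖f k‖ := by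
  calc ‖z - f i‖ = ‖(z - ∑ k ∈ s, f k) + ∑ k ∈ s.erase i, f k‖ := by
        rw [← Finset.add_sum_erase s f hi]; abel_nf
    _ ≤ _ := (norm_add_le _ _).trans (add_le_add_right (norm_sum_le _ _) _)

theorem circleDist_le_abs_of_coe_eq {x θ φ : ℝ} (h : (x : Real.Angle) = (θ - φ : ℝ)) :
    circleDist θ φ ≤ |x| := by
  obtain ⟨k, hk⟩ := Real.Angle.angle_eq_iff_two_pi_dvd_sub.mp h
  have hx : x = θ - φ + 2 * (k : ℝ) * Real.pi := by linarith
  exact hx ▸ ciInf_le ⟨0, by rintro _ ⟨j, rfl⟩; positivity⟩ k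

theorem circleDist_arg_le_abs_arg_div_exp {Z : ℂ} (hZ : Z ≠ 0) (φ : ℝ) :
    circleDist Z.arg φ ≤ |(Z / exp (I * φ)).arg| := by
  refine circleDist_le_abs_of_coe_eq ?_
  rw [mul_comm, arg_div_coe_angle hZ (exp_ne_zero _), arg_exp_mul_I, Real.Angle.coe_toIocMod,
    Real.Angle.coe_sub]

theorem abs_im_mul_le_of_norm_sub_ofReal_le {u : ℂ} {a r : ℝ} (hra : r ≤ a)
    (h : ‖u - a‖ ≤ r) : |u.im| * a ≤ r * ‖u‖ := by
  have hr : 0 ≤ r := (norm_nonneg _).trans h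
  have hdisk : (u.re - a) ^ 2 + u.im ^ 2 ≤ r ^ 2 := by
    have := pow_le_pow_left₀ (norm_nonneg _) h 2
    rwa [Complex.sq_norm, normSq_apply, sub_re, sub_im, ofReal_re, ofReal_im, sub_zero, ← sq,
      ← sq] at this
  have hsq : u.im ^ 2 * a ^ 2 ≤ r ^ 2 * ‖u‖ ^ 2 := by
    rw [Complex.sq_norm, normSq_apply]
    -- with x = re u: r²x² - (r² - (x - a)²)(a² - r²) = (a x - (a² - r²))²
    nlinarith [mul_le_mul_of_nonneg_right hdisk (by nlinarith : 0 ≤ a ^ 2 - r ^ 2),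
      sq_nonneg (a * u.re - (a ^ 2 - r ^ 2))]
  have ha : 0 ≤ a := hr.trans hra
  simpa [abs_mul, abs_of_nonneg ha] using
    abs_le_of_sq_le_sq (a := u.im * a) (by rwa [mul_pow, mul_pow]) (by positivity)

theorem abs_arg_le_arcsin_of_norm_sub_ofReal_le {u : ℂ} {a r : ℝ} (hu : u ≠ 0) (ha : 0 < a)
    (hra : r ≤ a) (h : ‖u - a‖ ≤ r) : |u.arg| ≤ Real.arcsin (r / a) := by
  have hr : 0 ≤ r := (norm_nonneg _).trans h
  have hre : 0 ≤ u.re := by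
    have := (abs_le.mp ((abs_re_le_norm (u - a)).trans h)).1
    rw [sub_re, ofReal_re] at this
    linarith
  have hsin : Real.sin |u.arg| = |u.im| / ‖u‖ := by
    rw [← Real.abs_sin_eq_sin_abs_of_abs_le_pi (abs_arg_le_pi u), sin_arg, abs_div, abs_norm]
  rw [Real.le_arcsin_iff_sin_le
      ⟨by linarith [abs_nonneg u.arg, Real.pi_pos], abs_arg_le_pi_div_two_iff.mpr hre⟩
      ⟨by linarith [div_nonneg hr ha.le], (div_le_one ha).mpr hra⟩, hsin,
    div_le_div_iff₀ (norm_pos_iff.mpr hu) ha]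
  exact abs_im_mul_le_of_norm_sub_ofReal_le hra h

theorem circleDist_arg_le_arcsin {Z : ℂ} {a r φ : ℝ} (hZ : Z ≠ 0) (ha : 0 < a) (hra : r ≤ a)
    (h : ‖Z - a * exp (I * φ)‖ ≤ r) : circleDist Z.arg φ ≤ Real.arcsin (r / a) := by
  refine (circleDist_arg_le_abs_arg_div_exp hZ φ).trans
    (abs_arg_le_arcsin_of_norm_sub_ofReal_le (div_ne_zero hZ (exp_ne_zero _)) ha hra ?_)
  rwa [← mul_div_cancel_right₀ (a : ℂ) (exp_ne_zero (I * φ)), ← sub_div, norm_div,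
    norm_exp_I_mul_ofReal, div_one]

theorem dominant_component_phase_bound {K : ℕ} (Z : ℂ) (d E : Fin (K + 1) → ℝ)
    (hd : ∀ k, 0 ≤ d k) (hd0 : 0 < d 0) (hZ : Z ≠ 0) (β : ℝ)
    (hclose :
      ‖Z - ∑ k, ((d k : ℝ) : ℂ) * Complex.exp (Complex.I * (E k : ℂ))‖ ≤ β)
    (hratio : (β + ∑ k ∈ Finset.univ.erase 0, d k) / d 0 ≤ 1) :
    ‖Z - ((d 0 : ℝ) : ℂ) * Complex.exp (Complex.I * (E 0 : ℂ))‖ ≤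
        β + ∑ k ∈ Finset.univ.erase 0, d k ∧
    circleDist Z.arg (E 0) ≤
      Real.arcsin ((β + ∑ k ∈ Finset.univ.erase 0, d k) / d 0) := by
  have hnorm (k : Fin (K + 1)) : ‖((d k : ℝ) : ℂ) * exp (I * (E k : ℂ))‖ = d k := by
    rw [norm_mul, norm_exp_I_mul_ofReal, mul_one, norm_real, Real.norm_of_nonneg (hd k)]
  have hdominant : ‖Z - ((d 0 : ℝ) : ℂ) * exp (I * (E 0 : ℂ))‖ ≤
      β + ∑ k ∈ Finset.univ.erase 0, d k := by
    simpa only [hnorm] using (norm_sub_le_norm_sub_sum_add_sum_erase (Finset.mem_univ 0)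
      (fun k ↦ ((d k : ℝ) : ℂ) * exp (I * (E k : ℂ))) Z).trans (add_le_add_left hclose _)
  exact ⟨hdominant, circleDist_arg_le_arcsin hZ hd0 ((div_le_one hd0).mp hratio) hdominant⟩
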